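/- arXiv:2405.10372 — 3 statements merged into one kernel-verified Lean document; each statement's English description precedes it below -/
import Mathlib

section
/- Let l̂, û, ẑ ∈ ℝ with l̂ ≤ ẑ ≤ û, and let z = max(ẑ,0). Then there exists δ ∈ {0,1} such that the mixed-integer linear constraints hold: z ≥ 0, z ≥ ẑ, z ≤ ẑ − l̂·(1 − δ), and z ≤ û·δ. -/
/-- Soundness of the MIP encoding of a ReLU neuron: the ReLU value `z = max(ẑ,0)` together
with some binary `δ` satisfies the mixed-integer linear constraints. -/
theorem stmt_3 (lhat uhat zhat z : ℝ) (hl : lhat ≤ zhat) (hu : zhat ≤ uhat)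
    (hz : z = max zhat 0) :
    ∃ δ : ℝ, (δ = 0 ∨ δ = 1) ∧ z ≥ 0 ∧ z ≥ zhat ∧
      z ≤ zhat - lhat * (1 - δ) ∧ z ≤ uhat * δ := by
  rcases le_or_gt zhat 0 with h | h
  · refine ⟨0, Or.inl rfl, ?_, ?_, ?_, ?_⟩ <;> simp [hz, max_eq_right h] <;> linarith
  · refine ⟨1, Or.inr rfl, ?_, ?_, ?_, ?_⟩ <;> simp [hz, max_eq_left h.le] <;> linarith
end

section
/- Let l̂, û, ẑ, z ∈ ℝ with l̂ ≤ ẑ ≤ û, and let δ ∈ {0,1}. If z ≥ 0, z ≥ ẑ, z ≤ ẑ − l̂·(1 − δ), and z ≤ û·δ, then z = max(ẑ,0). -/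
/-- Completeness of the MIP encoding of a ReLU neuron: any `z` satisfying the
mixed-integer linear constraints for some binary `δ` equals the ReLU value `max(ẑ,0)`. -/
theorem stmt_4 (lhat uhat zhat z δ : ℝ) (hl : lhat ≤ zhat) (hu : zhat ≤ uhat)
    (hδ : δ = 0 ∨ δ = 1) (h1 : z ≥ 0) (h2 : z ≥ zhat)
    (h3 : z ≤ zhat - lhat * (1 - δ)) (h4 : z ≤ uhat * δ) :
    z = max zhat 0 := by
  rcases hδ with h | h <;> subst h <;> simp at h3 h4
  · have : z = 0 := le_antisymm h4 h1
    subst this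
    symm; simp [max_eq_right]; linarith
  · have : z = zhat := le_antisymm h3 h2
    subst this
    symm; rw [max_eq_left]; linarith
end

section
/- Let l̂ < û be real numbers, set a = (max(û,0) − max(l̂,0))/(û − l̂), and let ẑ ∈ [l̂, û]. Then z = max(ẑ,0) satisfies the triangle linear relaxation constraints: z ≥ 0, z ≥ ẑ, and z ≤ a·(ẑ − l̂) + max(l̂,0). -/
/-- The ReLU value satisfies the triangle linear relaxation constraints. -/
theorem stmt_6 (lhat uhat zhat : ℝ) (hlu : lhat < uhat)
    (hl : lhat ≤ zhat) (hu : zhat ≤ uhat) :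
    max zhat 0 ≥ 0 ∧ max zhat 0 ≥ zhat ∧
      max zhat 0 ≤ ((max uhat 0 - max lhat 0) / (uhat - lhat)) * (zhat - lhat) + max lhat 0 := by
  refine ⟨le_max_right _ _, le_max_left _ _, ?_⟩
  rw [div_mul_eq_mul_div, ← sub_le_iff_le_add, le_div_iff₀ (by linarith)]
  rcases le_total zhat 0 with hz | hz <;>
  rcases le_total lhat 0 with hll | hll <;>
  rcases le_total uhat 0 with huu | huu <;>
  simp [max_eq_left, max_eq_right, hz, hll, huu] <;>
  nlinarith [mul_nonneg (sub_nonneg.2 hl) (sub_nonneg.2 hu),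
    mul_nonneg (sub_nonneg.2 hl) (sub_nonneg.2 hlu.le)]
end
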